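/- arXiv:math/0212211 — 2 statements merged into one kernel-verified Lean document; each statement's English description precedes it below -/
import Mathlib

section
/- For $n \ge 2$, the number of lattice points $u \in \mathbb{Z}_{\ge 0}^n$ with $\sum_{i=1}^n u_i/a_i < 1$ is strictly greater than $\prod_{i=1}^n a_i / n!$ for all positive reals $a_1,\dots,a_n$. -/
/-!
Slicing by the first coordinate, the points with `u 0 = k` are those of the same problem in one
dimension less with every `a i` scaled by `1 - k / a 0`. By induction it therefore suffices that the
left Riemann sum `∑_{k < a₀} (1 - k/a₀)^m` dominates `∫₀^{a₀} (1 - t/a₀)^m dt = a₀/(m+1)`, strictly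
for `m ≥ 1`; this is shown by telescoping `ramp a k ^ (m+1)` using
`x^(m+1) - y^(m+1) ≤ (m+1) x^m (x - y)`. For `n ≥ 2` the strict inequality in the first coordinate
already makes the count strictly larger.
-/

open Finset
open scoped Nat

section PowDiff
variable {R : Type*} [CommRing R] [LinearOrder R] [IsStrictOrderedRing R] {x y : R}

theorem pow_succ_sub_pow_succ_le (hy : 0 ≤ y) (hyx : y ≤ x) (m : ℕ) :
    x ^ (m + 1) - y ^ (m + 1) ≤ (m + 1) * x ^ m * (x - y) := by
  have hx : 0 ≤ x := hy.trans hyx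
  have h := abs_pow_sub_pow_le x y (m + 1)
  rw [abs_of_nonneg (sub_nonneg.2 (pow_le_pow_left₀ hy hyx _)), abs_of_nonneg (sub_nonneg.2 hyx),
    abs_of_nonneg hx, abs_of_nonneg hy, max_eq_left hyx, Nat.add_sub_cancel] at h
  push_cast at h
  linarith

theorem pow_succ_sub_pow_succ_lt (hy : 0 ≤ y) (hyx : y < x) {m : ℕ} (hm : m ≠ 0) :
    x ^ (m + 1) - y ^ (m + 1) < (m + 1) * x ^ m * (x - y) := by
  obtain ⟨k, rfl⟩ := Nat.exists_eq_succ_of_ne_zero hm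
  have hx : 0 ≤ x := hy.trans hyx.le
  have hk := pow_succ_sub_pow_succ_le hy hyx.le k
  have hpow : y ^ (k + 1) < x ^ (k + 1) := pow_lt_pow_left₀ hyx hy k.succ_ne_zero
  calc x ^ (k + 1 + 1) - y ^ (k + 1 + 1)
      = x * (x ^ (k + 1) - y ^ (k + 1)) + y ^ (k + 1) * (x - y) := by ring
    _ < x * ((k + 1) * x ^ k * (x - y)) + x ^ (k + 1) * (x - y) :=
        add_lt_add_of_le_of_lt (mul_le_mul_of_nonneg_left hk hx)
          (mul_lt_mul_of_pos_right hpow (sub_pos.2 hyx))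
    _ = ((k + 1 : ℕ) + 1) * x ^ (k + 1) * (x - y) := by push_cast; ring

end PowDiff

/-- Truncated at `0` so that the telescoping sum over `k < ⌈a⌉₊` ends exactly at `0`. -/
noncomputable def ramp (a : ℝ) (k : ℕ) : ℝ := max (1 - k / a) 0

namespace ramp
variable {a : ℝ}

theorem nonneg (k : ℕ) : 0 ≤ ramp a k := le_max_right _ _

theorem zero : ramp a 0 = 1 := by simp [ramp]

theorem ceil (ha : 0 < a) : ramp a ⌈a⌉₊ = 0 := by
  refine max_eq_right ?_
  rw [sub_nonpos, one_le_div ha]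
  exact Nat.le_ceil a

theorem of_lt_ceil (ha : 0 < a) {k : ℕ} (hk : k < ⌈a⌉₊) : ramp a k = 1 - k / a := by
  refine max_eq_left ?_
  rw [sub_nonneg, div_le_one ha]
  exact (Nat.lt_ceil.1 hk).le

theorem succ_le (ha : 0 < a) (k : ℕ) : ramp a (k + 1) ≤ ramp a k := by
  unfold ramp
  gcongr
  simp

theorem sub_succ_le (ha : 0 < a) (k : ℕ) : ramp a k - ramp a (k + 1) ≤ 1 / a := by
  rw [sub_le_iff_le_add']
  refine max_le ?_ (add_nonneg (nonneg _) (by positivity))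
  calc 1 - k / a = (1 - ((k + 1 : ℕ) : ℝ) / a) + 1 / a := by push_cast; ring
    _ ≤ ramp a (k + 1) + 1 / a := by gcongr; exact le_max_left _ _

theorem div_succ_mul_le_pow (ha : 0 < a) (m k : ℕ) :
    a / (m + 1) * ((m + 1) * ramp a k ^ m * (ramp a k - ramp a (k + 1))) ≤ ramp a k ^ m := by
  calc a / (m + 1) * ((m + 1) * ramp a k ^ m * (ramp a k - ramp a (k + 1)))
      = ramp a k ^ m * (a * (ramp a k - ramp a (k + 1))) := by field_simp
    _ ≤ ramp a k ^ m * (a * (1 / a)) := by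
        gcongr
        · exact pow_nonneg (nonneg k) m
        · exact sub_succ_le ha k
    _ = ramp a k ^ m := by field_simp

theorem div_succ_mul_sub_pow_le (ha : 0 < a) (m k : ℕ) :
    a / (m + 1) * (ramp a k ^ (m + 1) - ramp a (k + 1) ^ (m + 1)) ≤ ramp a k ^ m :=
  (mul_le_mul_of_nonneg_left (pow_succ_sub_pow_succ_le (nonneg _) (succ_le ha k) m)
    (by positivity)).trans (div_succ_mul_le_pow ha m k)

theorem div_succ_mul_sub_pow_zero_lt (ha : 0 < a) {m : ℕ} (hm : m ≠ 0) :
    a / (m + 1) * (ramp a 0 ^ (m + 1) - ramp a 1 ^ (m + 1)) < ramp a 0 ^ m := by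
  have hlt : ramp a 1 < ramp a 0 := by
    rw [zero]
    exact max_lt (by simpa using ha) one_pos
  exact (mul_lt_mul_of_pos_left (pow_succ_sub_pow_succ_lt (nonneg _) hlt hm)
    (by positivity)).trans_le (div_succ_mul_le_pow ha m 0)

theorem div_succ_eq_sum (ha : 0 < a) (m : ℕ) :
    a / (m + 1) = ∑ k ∈ range ⌈a⌉₊,
      a / (m + 1) * (ramp a k ^ (m + 1) - ramp a (k + 1) ^ (m + 1)) := by
  rw [← mul_sum, sum_range_sub' (fun k ↦ ramp a k ^ (m + 1)), zero, ceil ha]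
  simp

end ramp

theorem div_succ_le_sum_range_ceil (a : ℝ) (ha : 0 < a) (m : ℕ) :
    a / (m + 1) ≤ ∑ k ∈ range ⌈a⌉₊, (1 - k / a) ^ m := by
  rw [ramp.div_succ_eq_sum ha]
  refine sum_le_sum fun k hk ↦ ?_
  rw [← ramp.of_lt_ceil ha (mem_range.1 hk)]
  exact ramp.div_succ_mul_sub_pow_le ha m k

theorem div_succ_lt_sum_range_ceil (a : ℝ) (ha : 0 < a) {m : ℕ} (hm : m ≠ 0) :
    a / (m + 1) < ∑ k ∈ range ⌈a⌉₊, (1 - k / a) ^ m := by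
  rw [ramp.div_succ_eq_sum ha]
  refine sum_lt_sum (fun k hk ↦ ?_) ⟨0, mem_range.2 (Nat.ceil_pos.2 ha), ?_⟩
  · rw [← ramp.of_lt_ceil ha (mem_range.1 hk)]
    exact ramp.div_succ_mul_sub_pow_le ha m k
  · rw [← ramp.of_lt_ceil ha (Nat.ceil_pos.2 ha)]
    exact ramp.div_succ_mul_sub_pow_zero_lt ha hm

noncomputable def latticePointsBelow {n : ℕ} (a : Fin n → ℝ) : Finset (Fin n → ℕ) :=
  {u ∈ Fintype.piFinset fun i ↦ range ⌈a i⌉₊ | ∑ i, (u i : ℝ) / a i < 1}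

theorem lt_ceil_of_sum_div_lt_one {n : ℕ} {a : Fin n → ℝ} (ha : ∀ i, 0 < a i) {u : Fin n → ℕ}
    (hu : ∑ i, (u i : ℝ) / a i < 1) (i : Fin n) : u i < ⌈a i⌉₊ := by
  rw [Nat.lt_ceil, ← div_lt_one (ha i)]
  refine lt_of_le_of_lt ?_ hu
  exact single_le_sum (f := fun j ↦ (u j : ℝ) / a j)
    (fun j _ ↦ div_nonneg (Nat.cast_nonneg _) (ha j).le) (mem_univ i)

theorem mem_latticePointsBelow {n : ℕ} {a : Fin n → ℝ} (ha : ∀ i, 0 < a i) (u : Fin n → ℕ) :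
    u ∈ latticePointsBelow a ↔ ∑ i, (u i : ℝ) / a i < 1 := by
  simp only [latticePointsBelow, mem_filter, Fintype.mem_piFinset, mem_range,
    and_iff_right_iff_imp]
  exact lt_ceil_of_sum_div_lt_one ha

theorem sum_cons_div_lt_one_iff {n : ℕ} (a : Fin (n + 1) → ℝ) (ha : ∀ i, 0 < a i) {k : ℕ}
    (hk : (k : ℝ) < a 0) (v : Fin n → ℕ) :
    ∑ i, ((Fin.cons k v : Fin (n + 1) → ℕ) i : ℝ) / a i < 1 ↔
      ∑ i, (v i : ℝ) / ((1 - k / a 0) * a i.succ) < 1 := by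
  have hc : 0 < 1 - k / a 0 := by rwa [sub_pos, div_lt_one (ha 0)]
  simp only [Fin.sum_univ_succ, Fin.cons_zero, Fin.cons_succ, div_mul_eq_div_div_swap,
    ← sum_div, div_lt_one hc]
  constructor <;> intro h <;> linarith

theorem card_latticePointsBelow_succ {n : ℕ} (a : Fin (n + 1) → ℝ) (ha : ∀ i, 0 < a i) :
    #(latticePointsBelow a) =
      ∑ k ∈ range ⌈a 0⌉₊, #(latticePointsBelow fun i ↦ (1 - k / a 0) * a i.succ) := by
  rw [card_eq_sum_card_fiberwise (f := fun u ↦ u 0) fun u hu ↦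
    mem_range.2 (lt_ceil_of_sum_div_lt_one ha ((mem_latticePointsBelow ha u).1 hu) 0)]
  refine sum_congr rfl fun k hk ↦ ?_
  have hk : (k : ℝ) < a 0 := Nat.lt_ceil.1 (mem_range.1 hk)
  have ha' : ∀ i : Fin n, 0 < (1 - k / a 0) * a i.succ := fun i ↦
    mul_pos (by rwa [sub_pos, div_lt_one (ha 0)]) (ha i.succ)
  let cons : (Fin n → ℕ) ↪ (Fin (n + 1) → ℕ) :=
    ⟨fun v ↦ Fin.cons k v, Fin.cons_right_injective (α := fun _ ↦ ℕ) k⟩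
  rw [← card_map cons]
  congr 1
  ext u
  simp only [mem_filter, mem_map, mem_latticePointsBelow ha, mem_latticePointsBelow ha']
  constructor
  · rintro ⟨hu, rfl⟩
    refine ⟨Fin.tail u, ?_, Fin.cons_self_tail u⟩
    rwa [← sum_cons_div_lt_one_iff a ha hk, Fin.cons_self_tail]
  · rintro ⟨v, hv, rfl⟩
    exact ⟨(sum_cons_div_lt_one_iff a ha hk v).2 hv, rfl⟩

theorem prod_div_factorial_succ {m : ℕ} (a : Fin (m + 1) → ℝ) :
    (∏ i, a i) / ((m + 1)! : ℝ) = a 0 / (m + 1) * ((∏ i : Fin m, a i.succ) / (m ! : ℝ)) := by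
  rw [Fin.prod_univ_succ, Nat.factorial_succ]
  push_cast
  field_simp

theorem sum_pow_mul_le_card_latticePointsBelow {m : ℕ} (a : Fin (m + 1) → ℝ)
    (ha : ∀ i, 0 < a i)
    (ih : ∀ b : Fin m → ℝ, (∀ i, 0 < b i) → (∏ i, b i) / (m ! : ℝ) ≤ #(latticePointsBelow b)) :
    (∑ k ∈ range ⌈a 0⌉₊, (1 - k / a 0) ^ m) * ((∏ i : Fin m, a i.succ) / (m ! : ℝ)) ≤
      #(latticePointsBelow a) := by
  rw [card_latticePointsBelow_succ a ha, sum_mul]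
  push_cast
  refine sum_le_sum fun k hk ↦ ?_
  have hc : 0 < 1 - k / a 0 := by
    rw [sub_pos, div_lt_one (ha 0)]
    exact Nat.lt_ceil.1 (mem_range.1 hk)
  refine (le_of_eq ?_).trans (ih _ fun i ↦ mul_pos hc (ha i.succ))
  rw [prod_mul_distrib, prod_const, card_univ, Fintype.card_fin, mul_div_assoc]

theorem prod_div_factorial_le_card_latticePointsBelow {n : ℕ} (a : Fin n → ℝ)
    (ha : ∀ i, 0 < a i) : (∏ i, a i) / (n ! : ℝ) ≤ #(latticePointsBelow a) := by
  induction n with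
  | zero =>
    have h0 : (fun i ↦ i.elim0 : Fin 0 → ℕ) ∈ latticePointsBelow a := by
      simp [mem_latticePointsBelow ha]
    simpa using card_pos.2 ⟨_, h0⟩
  | succ m ih =>
    rw [prod_div_factorial_succ]
    refine le_trans ?_ (sum_pow_mul_le_card_latticePointsBelow a ha ih)
    gcongr
    · exact div_nonneg (prod_nonneg fun i _ ↦ (ha i.succ).le) (Nat.cast_nonneg _)
    · exact div_succ_le_sum_range_ceil (a 0) (ha 0) m

theorem prod_div_factorial_lt_card_latticePointsBelow {n : ℕ} (hn : 2 ≤ n) (a : Fin n → ℝ)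
    (ha : ∀ i, 0 < a i) : (∏ i, a i) / (n ! : ℝ) < #(latticePointsBelow a) := by
  obtain ⟨m, rfl⟩ : ∃ m, n = m + 1 := ⟨n - 1, by omega⟩
  rw [prod_div_factorial_succ]
  refine lt_of_lt_of_le ?_
    (sum_pow_mul_le_card_latticePointsBelow a ha fun b hb ↦
      prod_div_factorial_le_card_latticePointsBelow b hb)
  gcongr
  · exact div_pos (prod_pos fun i _ ↦ ha i.succ) (by positivity)
  · exact div_succ_lt_sum_range_ceil (a 0) (ha 0) (by omega)

/-- For `n ≥ 2`, the number of lattice points `u ∈ ℤ_{≥0}ⁿ` with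
`∑ uᵢ/aᵢ < 1` strictly exceeds `∏ aᵢ / n!`, for all positive reals `aᵢ`. -/
theorem stmt2 (n : ℕ) (hn : 2 ≤ n) (a : Fin n → ℝ) (ha : ∀ i, 0 < a i) :
    ∃ S : Finset (Fin n → ℕ),
      (∀ u : Fin n → ℕ, u ∈ S ↔ ∑ i, (u i : ℝ) / a i < 1) ∧
      (∏ i, a i) / (Nat.factorial n : ℝ) < (S.card : ℝ) :=
  ⟨latticePointsBelow a, mem_latticePointsBelow ha,
    prod_div_factorial_lt_card_latticePointsBelow hn a ha⟩
end

section
/- Let $F \in K[x_1,\dots,x_n]$ be homogeneous of degree $d$, and let $L \subseteq \mathbb{A}^n$ be a linear subspace defined by the vanishing of linearly independent linear forms $z_1,\dots,z_e$. If $\mathrm{mult}_p F \ge d$ for every point $p \in L$, then $F$ lies in the subalgebra $K[z_1,\dots,z_e]$, i.e., $F$ is a homogeneous polynomial of degree $d$ in $z_1,\dots,z_e$. -/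
/-
Homogeneity of `F` gives, for every monomial `m` and every scalar `τ` of any commutative ring
containing the coefficients,
  `τ ^ |m| · [F(X + τ p)]_m = τ ^ d · [F(X + p)]_m`,
since both sides are the `m`-coefficient of `F(τ X + τ p) = F(τ (X + p))`.

Taking `τ = t` in `K[t]` and then `t = 0` shows that `F(X + p)` has no monomials of degree `> d`
and that its degree-`d` part is `F`; multiplicity `≥ d` at `p` removes the monomials of degree
`< d`, so `F(X + p) = F` for every `p ∈ L`. Over a domain the same identity turns invariance under
`p` into invariance under `τ p` for every `τ`, so `F` is invariant under translation by any
combination `∑ₖ τₖ pₖ` with `pₖ ∈ L` and `τₖ ∈ K[X]`.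

Let `M` be the coefficient matrix of the `z_j`, so `z = M X`, and `N` a right inverse of `M`
(its rows are independent). The columns of `N M - 1` lie in `L`, so
`F = F(X + (N M - 1) X) = F(N z)`, which is a polynomial in the `z_j`.
-/

open MvPolynomial

/-- The multiplicity of `F` at `p` is at least `d`: every monomial appearing in
the Taylor expansion of `F` at `p` (i.e., in `F(X + p)`) has total degree `≥ d`. -/
def multGE {K : Type*} [CommRing K] {σ : Type*}
    (F : MvPolynomial σ K) (p : σ → K) (d : ℕ) : Prop :=
  ∀ u ∈ ((bind₁ fun i : σ => (X i : MvPolynomial σ K) + C (p i)) F).support,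
    d ≤ u.sum fun _ e => e

open Matrix

theorem Matrix.exists_mul_eq_one_of_linearIndependent_row {m n K : Type*} [Fintype m]
    [Fintype n] [DecidableEq m] [Field K] {M : Matrix m n K} (h : LinearIndependent K M.row) :
    ∃ N : Matrix n m K, M * N = 1 := by
  refine mulVec_surjective_iff_exists_right_inverse.1 ?_
  rw [← coe_mulVecLin, ← LinearMap.range_eq_top]
  apply Submodule.eq_top_of_finrank_eq
  rw [← rank, h.rank_matrix, Module.finrank_fintype_fun_eq_card]

namespace MvPolynomial

section LinearForms

variable {R σ ι : Type*} [CommSemiring R] [Fintype σ]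

theorem exists_matrix_map_C_mulVec_X_eq {z : ι → MvPolynomial σ R}
    (hz : ∀ j, (z j).IsHomogeneous 1) : ∃ M : Matrix ι σ R, M.map C *ᵥ X = z := by
  have hspan : ∀ j, ∃ c : σ → R, ∑ i, c i • X i = z j := fun j => by
    rw [← Submodule.mem_span_range_iff_exists_fun, ← homogeneousSubmodule_one_eq_span_X]
    exact hz j
  choose M hM using hspan
  refine ⟨Matrix.of M, ?_⟩
  ext j : 1
  simp only [← hM, mulVec, dotProduct, Matrix.map_apply, Matrix.of_apply, smul_eq_C_mul]

theorem linearIndependent_row_of_map_C_mulVec_X {M : Matrix ι σ R}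
    (h : LinearIndependent R (M.map C *ᵥ X)) : LinearIndependent R M.row := by
  refine LinearIndependent.of_comp (Fintype.linearCombination R (X : σ → MvPolynomial σ R)) ?_
  convert h using 1
  ext j : 1
  simp [Fintype.linearCombination_apply, mulVec, dotProduct, smul_eq_C_mul]

theorem eval_map_C_mulVec_X (M : Matrix ι σ R) (p : σ → R) (j : ι) :
    eval p ((M.map C *ᵥ X) j) = (M *ᵥ p) j := by
  simp [mulVec, dotProduct]

end LinearForms

theorem aeval_mem_of_forall_mem {R A σ : Type*} [CommSemiring R] [CommSemiring A] [Algebra R A]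
    {S : Subalgebra R A} {g : σ → A} (hg : ∀ i, g i ∈ S) (F : MvPolynomial σ R) :
    aeval g F ∈ S :=
  Algebra.adjoin_le (Set.range_subset_iff.2 hg) (Algebra.adjoin_range_eq_range_aeval R g ▸ ⟨F, rfl⟩)

variable {R : Type*} [CommRing R] {σ : Type*}

noncomputable def translate (p : σ → R) : MvPolynomial σ R →ₐ[R] MvPolynomial σ R :=
  bind₁ fun i => X i + C (p i)

noncomputable def scale (τ : R) : MvPolynomial σ R →ₐ[R] MvPolynomial σ R :=
  bind₁ fun i => C τ * X i

theorem translate_zero (F : MvPolynomial σ R) : translate 0 F = F := by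
  simp [translate, bind₁_X_left]

theorem translate_add (v w : σ → R) (F : MvPolynomial σ R) :
    translate (v + w) F = translate v (translate w F) := by
  simp only [translate, bind₁_bind₁, map_add, bind₁_X_right, bind₁_C_right, Pi.add_apply, add_assoc]

theorem map_translate {S : Type*} [CommRing S] (f : R →+* S) (v : σ → R) (F : MvPolynomial σ R) :
    map f (translate v F) = translate (f ∘ v) (map f F) := by
  simp [translate, map_bind₁]

theorem aeval_X_map_C (F : MvPolynomial σ R) :
    aeval X (map (C : R →+* MvPolynomial σ R) F) = F := by
  rw [← algebraMap_eq, aeval_map_algebraMap, aeval_X_left_apply]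

theorem aeval_X_translate_map_C (w : σ → MvPolynomial σ R) (F : MvPolynomial σ R) :
    aeval X (translate w (map C F)) = bind₁ (X + w) F := by
  rw [translate, aeval_bind₁]
  simp only [map_add, aeval_X, aeval_C, Algebra.algebraMap_self, RingHom.id_apply]
  rw [← algebraMap_eq, aeval_map_algebraMap]
  rfl

theorem scale_translate_smul (τ : R) (v : σ → R) (F : MvPolynomial σ R) :
    scale τ (translate (τ • v) F) = translate v (scale τ F) := by
  simp only [translate, scale, bind₁_bind₁, map_add, map_mul, bind₁_X_right, bind₁_C_right,
    Pi.smul_apply, smul_eq_mul, mul_add]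

theorem scale_monomial (τ : R) (u : σ →₀ ℕ) (a : R) :
    scale τ (monomial u a) = monomial u (τ ^ u.degree * a) := by
  classical
  rw [scale, bind₁_monomial, monomial_eq, Finsupp.prod, Finsupp.degree_apply, mul_comm (τ ^ _),
    C_mul, mul_assoc]
  simp only [mul_pow, Finset.prod_mul_distrib, ← C_pow, ← map_prod, Finset.prod_pow_eq_pow_sum]

theorem coeff_scale (τ : R) (F : MvPolynomial σ R) (m : σ →₀ ℕ) :
    coeff m (scale τ F) = τ ^ m.degree * coeff m F := by
  induction F using MvPolynomial.induction_on' with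
  | monomial u a =>
    classical
    rw [scale_monomial, coeff_monomial, coeff_monomial]
    split_ifs with h <;> simp [h]
  | add F G hF hG => simp only [map_add, coeff_add, hF, hG, mul_add]

namespace IsHomogeneous

variable {d : ℕ} {F : MvPolynomial σ R}

theorem degree_eq_of_coeff_ne_zero (hF : F.IsHomogeneous d) {m : σ →₀ ℕ}
    (hm : coeff m F ≠ 0) : m.degree = d :=
  (hF.degree_eq_sum_deg_support (mem_support_iff.2 hm)).symm

theorem scale_eq (hF : F.IsHomogeneous d) (τ : R) : scale τ F = τ ^ d • F := by
  ext m
  rw [coeff_scale, coeff_smul, smul_eq_mul]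
  by_cases hm : coeff m F = 0
  · simp [hm]
  · rw [hF.degree_eq_of_coeff_ne_zero hm]

theorem pow_degree_mul_coeff_translate_smul (hF : F.IsHomogeneous d) (τ : R)
    (v : σ → R) (m : σ →₀ ℕ) :
    τ ^ m.degree * coeff m (translate (τ • v) F) = τ ^ d * coeff m (translate v F) := by
  rw [← coeff_scale, scale_translate_smul, hF.scale_eq, map_smul, coeff_smul, smul_eq_mul]

theorem translate_eq_self_of_multGE (hF : F.IsHomogeneous d) {p : σ → R}
    (hp : multGE F p d) : translate p F = F := by
  ext m
  -- `key : t ^ |m| * [F(X + t p)]_m = t ^ d * C [F(X + p)]_m` in `R[t]`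
  have key := (hF.map Polynomial.C).pow_degree_mul_coeff_translate_smul
    (Polynomial.X (R := R)) (Polynomial.C ∘ p) m
  rw [← map_translate, coeff_map] at key
  have hP : (coeff m (translate (Polynomial.X (R := R) • (Polynomial.C ∘ p))
      (map Polynomial.C F))).eval 0 = coeff m F := by
    have hid : (Polynomial.evalRingHom (0 : R)).comp Polynomial.C = RingHom.id R :=
      RingHom.ext fun _ => Polynomial.eval_C
    rw [← Polynomial.coe_evalRingHom, ← coeff_map, map_translate, map_map, hid, map_id]
    convert congrArg (coeff m) (translate_zero F)
    ext i
    simp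
  by_cases hlt : m.degree < d
  · rw [hF.coeff_eq_zero hlt.ne]
    by_contra h
    exact absurd (hp m (mem_support_iff.2 h)) (not_le.2 hlt)
  obtain ⟨k, hk⟩ := Nat.exists_eq_add_of_le (not_lt.1 hlt)
  rw [hk, pow_add, mul_assoc] at key
  have hk0 := congrArg (Polynomial.eval 0) ((Polynomial.isRegular_X_pow d).left key)
  simp only [Polynomial.eval_mul, Polynomial.eval_pow, Polynomial.eval_X, hP,
    Polynomial.eval_C] at hk0
  rcases k with _ | k
  · simpa using hk0.symm
  · rw [← hk0, hF.coeff_eq_zero (by omega), mul_zero]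

variable [IsDomain R]

theorem translate_smul_eq_self (hF : F.IsHomogeneous d) (τ : R) {v : σ → R}
    (hv : translate v F = F) : translate (τ • v) F = F := by
  rcases eq_or_ne τ 0 with rfl | hτ
  · rw [zero_smul, translate_zero]
  ext m
  have key := hF.pow_degree_mul_coeff_translate_smul τ v m
  rw [hv] at key
  by_cases hm : coeff m F = 0
  · rw [hm, mul_zero] at key
    rw [hm]
    exact (mul_eq_zero.1 key).resolve_left (pow_ne_zero _ hτ)
  · rw [hF.degree_eq_of_coeff_ne_zero hm] at key
    exact mul_left_cancel₀ (pow_ne_zero _ hτ) key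

theorem translate_sum_smul_eq_self (hF : F.IsHomogeneous d) {ι : Type*} (s : Finset ι)
    (τ : ι → R) {v : ι → σ → R} (hv : ∀ k ∈ s, translate (v k) F = F) :
    translate (∑ k ∈ s, τ k • v k) F = F := by
  classical
  induction s using Finset.induction_on with
  | empty => rw [Finset.sum_empty, translate_zero]
  | insert k s hk ih =>
    rw [Finset.sum_insert hk, translate_add, ih fun j hj => hv j (Finset.mem_insert_of_mem hj),
      hF.translate_smul_eq_self _ (hv k (Finset.mem_insert_self k s))]

theorem bind₁_X_add_mulVec_eq_self [Fintype σ] (hF : F.IsHomogeneous d) (Q : Matrix σ σ R)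
    (hQ : ∀ k, translate (Q.col k) F = F) : bind₁ (X + Q.map C *ᵥ X) F = F := by
  have hG := (hF.map (C : R →+* MvPolynomial σ R)).translate_sum_smul_eq_self Finset.univ X
    (v := fun k => C ∘ Q.col k) fun k _ => by rw [← map_translate, hQ k]
  have h := congrArg (MvPolynomial.aeval (X : σ → MvPolynomial σ R)) hG
  rw [aeval_X_translate_map_C, aeval_X_map_C] at h
  convert h using 3
  ext i
  simp only [Pi.add_apply, Finset.sum_apply, Pi.smul_apply, Function.comp_apply, smul_eq_mul,
    mulVec, dotProduct, Matrix.map_apply, Matrix.col_apply, mul_comm]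

end IsHomogeneous

end MvPolynomial

/-- Key structural step in the proof of Theorem 3.5: if `F` is homogeneous of
degree `d` and has multiplicity `≥ d` at every point of the linear subspace
`L = {z₁ = ⋯ = z_e = 0}` cut out by linearly independent linear forms, then `F`
is a polynomial in `z₁,…,z_e`. -/
theorem stmt9 (K : Type*) [Field K] (n e d : ℕ)
    (F : MvPolynomial (Fin n) K) (hhom : F.IsHomogeneous d)
    (z : Fin e → MvPolynomial (Fin n) K)
    (hz : ∀ j, (z j).IsHomogeneous 1)
    (hind : LinearIndependent K z)
    (hmult : ∀ p : Fin n → K, (∀ j, eval p (z j) = 0) → multGE F p d) :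
    F ∈ Algebra.adjoin K (Set.range z) := by
  obtain ⟨M, rfl⟩ := exists_matrix_map_C_mulVec_X_eq hz
  obtain ⟨N, hN⟩ :=
    exists_mul_eq_one_of_linearIndependent_row (linearIndependent_row_of_map_C_mulVec_X hind)
  have hL : ∀ k j, eval ((N * M - 1).col k) ((M.map C *ᵥ X) j) = 0 := fun k j => by
    rw [eval_map_C_mulVec_X]
    change (M * (N * M - 1) : Matrix (Fin e) (Fin n) K) j k = 0
    rw [Matrix.mul_sub, ← Matrix.mul_assoc, hN, Matrix.one_mul, Matrix.mul_one, sub_self,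
      Matrix.zero_apply]
  have hinv := hhom.bind₁_X_add_mulVec_eq_self (N * M - 1)
    fun k => hhom.translate_eq_self_of_multGE (hmult _ (hL k))
  have hgen : X + (N * M - 1).map C *ᵥ X = N.map C *ᵥ (M.map C *ᵥ X) := by
    rw [mulVec_mulVec, ← Matrix.map_mul, Matrix.map_sub _ (map_sub C),
      Matrix.map_one _ (map_zero C) (map_one C), sub_mulVec, one_mulVec, add_sub_cancel]
  rw [← hinv, hgen]
  refine aeval_mem_of_forall_mem (fun i => ?_) F
  simp only [mulVec, dotProduct, Matrix.map_apply]
  exact Subalgebra.sum_mem _ fun j _ => Subalgebra.mul_mem _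
    (Subalgebra.algebraMap_mem _ (N i j)) (Algebra.subset_adjoin (Set.mem_range_self j))
end
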